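/- arXiv:2107.07390 — 2 statements merged into one kernel-verified Lean document; each statement's English description precedes it below -/
import Mathlib

section
/- Let X_1, …, X_n be independent ℝ^k-valued random variables with CDFs V′_1, …, V′_n, let S_n be their empirical CDF and V_n = (1/n)∑V′_v the mean CDF. Let ψ : ℝ^k → [0,∞) be measurable such that ∫ ψ(x)·V_n(x)·(1 − V_n(x)) dx < ∞. Then E[∫ ψ(x)·(S_n(x) − V_n(x))² dx] ≤ (1/n)·∫ ψ(x)·V_n(x)·(1 − V_n(x)) dx. -/
open MeasureTheory ProbabilityTheory Finset
open scoped Classical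

/-- For fixed `x`, the empirical CDF minus mean CDF has second moment
bounded by `(1/n) V (1-V)`, and the square is integrable. -/
lemma aux_fixed_x {Ω : Type*} [MeasurableSpace Ω] (μ : Measure Ω) [IsProbabilityMeasure μ]
    (n k : ℕ) (hn : 0 < n)
    (X : Fin n → Ω → (Fin k → ℝ)) (hmeas : ∀ v, Measurable (X v))
    (hindep : iIndepFun X μ) (x : Fin k → ℝ) :
    Integrable (fun ω => ((1 / n : ℝ) *
        ((Finset.univ.filter fun v : Fin n => ∀ i, X v ω i ≤ x i).card)
        - (1 / n : ℝ) * ∑ v, (μ {ω | ∀ i, X v ω i ≤ x i}).toReal) ^ 2) μ ∧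
    (∫ ω, ((1 / n : ℝ) *
        ((Finset.univ.filter fun v : Fin n => ∀ i, X v ω i ≤ x i).card)
        - (1 / n : ℝ) * ∑ v, (μ {ω | ∀ i, X v ω i ≤ x i}).toReal) ^ 2 ∂μ)
      ≤ (1 / n : ℝ) *
        (((1 / n : ℝ) * ∑ v, (μ {ω | ∀ i, X v ω i ≤ x i}).toReal) *
          (1 - (1 / n : ℝ) * ∑ v, (μ {ω | ∀ i, X v ω i ≤ x i}).toReal)) := by
  set A : Fin n → Set Ω := fun v => {ω | ∀ i, X v ω i ≤ x i} with hA_def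
  have hA : ∀ v, MeasurableSet (A v) := by
    intro v
    have : A v = ⋂ i, {ω | X v ω i ≤ x i} := by ext ω; simp [hA_def, Set.mem_iInter]
    rw [this]
    exact MeasurableSet.iInter fun i =>
      measurableSet_le ((measurable_pi_apply i).comp (hmeas v)) measurable_const
  set p : Fin n → ℝ := fun v => (μ (A v)).toReal with hp_def
  set Y : Fin n → Ω → ℝ := fun v => (A v).indicator (fun _ => (1 : ℝ)) with hY_def
  have hp0 : ∀ v, 0 ≤ p v := fun v => ENNReal.toReal_nonneg
  have hp1 : ∀ v, p v ≤ 1 := fun v => by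
    simpa [hp_def] using ENNReal.toReal_mono (by simp) (prob_le_one (μ := μ) (s := A v))
  have hYsq : ∀ v, (Y v) ^ 2 = Y v := by
    intro v; funext ω
    simp only [Pi.pow_apply, hY_def, Set.indicator_apply]
    split <;> norm_num
  have hYmem : ∀ v, MemLp (Y v) 2 μ := fun v => (memLp_const (1 : ℝ)).indicator (hA v)
  have hYint : ∀ v, ∫ ω, Y v ω ∂μ = p v := by
    intro v
    simpa [hY_def, hp_def, Measure.real_def] using integral_indicator_const (1 : ℝ) (hA v)
  have hYvar : ∀ v, variance (Y v) μ = p v - p v ^ 2 := by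
    intro v
    rw [variance_eq_sub (hYmem v)]
    rw [hYsq v]
    rw [hYint v]
  -- independence of the indicators
  have hYindep : iIndepFun Y μ := by
    have hBset : MeasurableSet {y : Fin k → ℝ | ∀ i, y i ≤ x i} := by
      have : {y : Fin k → ℝ | ∀ i, y i ≤ x i} = ⋂ i, {y : Fin k → ℝ | y i ≤ x i} := by
        ext y; simp [Set.mem_iInter]
      rw [this]
      exact MeasurableSet.iInter fun i =>
        measurableSet_le (measurable_pi_apply i) measurable_const
    have := hindep.comp (fun v => ({y : Fin k → ℝ | ∀ i, y i ≤ x i}).indicator (fun _ => (1:ℝ)))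
      (fun v => Measurable.indicator measurable_const hBset)
    convert this using 2 with v
    funext ω; simp [hY_def, hA_def, Set.indicator_apply]
  have hvarsum : variance (∑ v, Y v) μ = ∑ v, (p v - p v ^ 2) := by
    rw [IndepFun.variance_sum (fun v _ => hYmem v)
      (fun i _ j _ hij => hYindep.indepFun hij)]
    exact Finset.sum_congr rfl fun v _ => hYvar v
  set W : Ω → ℝ := fun ω => (1 / n : ℝ) * ∑ v, Y v ω with hW_def
  have hWmem : MemLp W 2 μ := by
    have : MemLp (∑ v, Y v) 2 μ := memLp_finset_sum' _ (fun v _ => hYmem v)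
    simpa [hW_def] using this.const_mul (1 / n : ℝ)
  have hWint : ∫ ω, W ω ∂μ = (1 / n : ℝ) * ∑ v, p v := by
    rw [hW_def]
    rw [integral_const_mul]
    congr 1
    rw [integral_finset_sum _ (fun v _ => (hYmem v).integrable one_le_two)]
    exact Finset.sum_congr rfl fun v _ => hYint v
  -- rewrite the integrand
  have hfun : (fun ω => ((1 / n : ℝ) *
        ((Finset.univ.filter fun v : Fin n => ∀ i, X v ω i ≤ x i).card)
        - (1 / n : ℝ) * ∑ v, (μ {ω | ∀ i, X v ω i ≤ x i}).toReal) ^ 2)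
      = fun ω => (W ω - ∫ ω', W ω' ∂μ) ^ 2 := by
    funext ω
    rw [hWint]
    congr 3
    rw [Finset.card_filter]
    push_cast
    exact Finset.sum_congr rfl fun v _ => by
      simp [hY_def, hA_def, Set.indicator_apply]
  have hvarW : variance W μ = (1 / n : ℝ) ^ 2 * ∑ v, (p v - p v ^ 2) := by
    have : variance W μ = (1 / n : ℝ) ^ 2 * variance (∑ v, Y v) μ := by
      have := variance_const_mul (1 / n : ℝ) (∑ v, Y v) μ
      simpa [hW_def] using this
    rw [this, hvarsum]
  have hInt : Integrable (fun ω => (W ω - ∫ ω', W ω' ∂μ) ^ 2) μ := by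
    have : MemLp (fun ω => W ω - ∫ ω', W ω' ∂μ) 2 μ := hWmem.sub (memLp_const _)
    simpa using this.integrable_sq
  have hIntEq : ∫ ω, (W ω - ∫ ω', W ω' ∂μ) ^ 2 ∂μ = variance W μ := by
    rw [variance_eq_integral hWmem.aestronglyMeasurable.aemeasurable]
  constructor
  · rw [hfun]; exact hInt
  · rw [hfun, hIntEq, hvarW]
    -- elementary inequality
    have hN : (0 : ℝ) < n := by exact_mod_cast hn
    have hcs : (∑ v, p v) ^ 2 ≤ (n : ℝ) * ∑ v, p v ^ 2 := by
      have := sq_sum_le_card_mul_sum_sq (s := (Finset.univ : Finset (Fin n))) (f := p)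
      simpa using this
    have hsum : ∑ v, (p v - p v ^ 2) = (∑ v, p v) - ∑ v, p v ^ 2 := Finset.sum_sub_distrib _ _
    rw [hsum]
    have key : (1/(n:ℝ))^3 * (∑ v, p v)^2 ≤ (1/(n:ℝ))^2 * ∑ v, p v ^ 2 := by
      calc (1/(n:ℝ))^3 * (∑ v, p v)^2 ≤ (1/(n:ℝ))^3 * ((n:ℝ) * ∑ v, p v ^ 2) :=
            mul_le_mul_of_nonneg_left hcs (by positivity)
        _ = (1/(n:ℝ))^2 * ∑ v, p v ^ 2 := by field_simp
    nlinarith [key]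


/-- Weighted integrated dispersion bound for the multivariate empirical CDF:
`E[∫ ψ(x)(S_n(x) − V_n(x))² dx] ≤ (1/n) ∫ ψ(x) V_n(x)(1 − V_n(x)) dx`. -/
theorem statement3
    {Ω : Type*} [MeasurableSpace Ω] (μ : Measure Ω) [IsProbabilityMeasure μ]
    (n k : ℕ) (hn : 0 < n)
    (X : Fin n → Ω → (Fin k → ℝ))
    (hmeas : ∀ v, Measurable (X v))
    (hindep : iIndepFun X μ)
    (V' : Fin n → (Fin k → ℝ) → ℝ)
    (hV' : ∀ v x, V' v x = (μ {ω | ∀ i, X v ω i ≤ x i}).toReal)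
    (S : Ω → (Fin k → ℝ) → ℝ)
    (hS : ∀ ω x, S ω x =
      (1 / n : ℝ) * ((Finset.univ.filter fun v : Fin n => ∀ i, X v ω i ≤ x i).card))
    (V : (Fin k → ℝ) → ℝ) (hV : ∀ x, V x = (1 / n : ℝ) * ∑ v, V' v x)
    (ψ : (Fin k → ℝ) → ℝ) (hψmeas : Measurable ψ) (hψpos : ∀ x, 0 ≤ ψ x)
    (hψint : Integrable (fun x => ψ x * (V x * (1 - V x))) volume) :
    (∫ ω, (∫ x, ψ x * (S ω x - V x) ^ 2 ∂volume) ∂μ) ≤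
      (1 / n : ℝ) * ∫ x, ψ x * (V x * (1 - V x)) ∂volume := by
  have hN : (0:ℝ) < n := by exact_mod_cast hn
  -- measurability of V'
  have hV'meas : ∀ v, Measurable (V' v) := by
    intro v
    have hs : MeasurableSet {q : (Fin k → ℝ) × Ω | ∀ i, X v q.2 i ≤ q.1 i} := by
      have : {q : (Fin k → ℝ) × Ω | ∀ i, X v q.2 i ≤ q.1 i}
          = ⋂ i, {q : (Fin k → ℝ) × Ω | X v q.2 i ≤ q.1 i} := by
        ext q; simp [Set.mem_iInter]
      rw [this]
      exact MeasurableSet.iInter fun i => measurableSet_le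
        ((measurable_pi_apply i).comp ((hmeas v).comp measurable_snd))
        ((measurable_pi_apply i).comp measurable_fst)
    have hm := (measurable_measure_prodMk_left (ν := μ) hs).ennreal_toReal
    have : V' v = fun x => (μ (Prod.mk x ⁻¹' {q : (Fin k → ℝ) × Ω | ∀ i, X v q.2 i ≤ q.1 i})).toReal := by
      funext x; rw [hV']; rfl
    rw [this]; exact hm
  have hVmeas : Measurable V := by
    have : V = fun x => (1 / n : ℝ) * ∑ v, V' v x := funext hV
    rw [this]
    exact measurable_const.mul (Finset.measurable_sum _ fun v _ => hV'meas v)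
  -- measurability of S on the product
  have hSmeas : Measurable (fun q : Ω × (Fin k → ℝ) => S q.1 q.2) := by
    have : (fun q : Ω × (Fin k → ℝ) => S q.1 q.2)
        = fun q => (1 / n : ℝ) * ∑ v : Fin n, (if ∀ i, X v q.1 i ≤ q.2 i then (1:ℝ) else 0) := by
      funext q
      rw [hS]
      congr 1
      rw [Finset.card_filter]
      push_cast
      rfl
    rw [this]
    refine measurable_const.mul (Finset.measurable_sum _ fun v _ => Measurable.ite ?_
      measurable_const measurable_const)
    have : {q : Ω × (Fin k → ℝ) | ∀ i, X v q.1 i ≤ q.2 i}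
        = ⋂ i, {q : Ω × (Fin k → ℝ) | X v q.1 i ≤ q.2 i} := by
      ext q; simp [Set.mem_iInter]
    rw [this]
    exact MeasurableSet.iInter fun i => measurableSet_le
      ((measurable_pi_apply i).comp ((hmeas v).comp measurable_fst))
      ((measurable_pi_apply i).comp measurable_snd)
  set G : Ω × (Fin k → ℝ) → ℝ := fun q => ψ q.2 * (S q.1 q.2 - V q.2) ^ 2 with hG_def
  have hGmeas : Measurable G :=
    (hψmeas.comp measurable_snd).mul (((hSmeas.sub (hVmeas.comp measurable_snd))).pow_const 2)
  set F : Ω × (Fin k → ℝ) → ENNReal := fun q => ENNReal.ofReal (G q) with hF_def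
  have hFmeas : Measurable F := hGmeas.ennreal_ofReal
  -- rewrite S - V in raw terms
  have hSV : ∀ ω x, S ω x - V x = (1 / n : ℝ) *
        ((Finset.univ.filter fun v : Fin n => ∀ i, X v ω i ≤ x i).card)
        - (1 / n : ℝ) * ∑ v, (μ {ω | ∀ i, X v ω i ≤ x i}).toReal := by
    intro ω x
    rw [hS, hV]
    congr 2
    exact Finset.sum_congr rfl fun v _ => hV' v x
  have haux := fun x => aux_fixed_x μ n k hn X hmeas hindep x
  have hVp : ∀ x, V x = (1 / n : ℝ) * ∑ v, (μ {ω | ∀ i, X v ω i ≤ x i}).toReal := by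
    intro x; rw [hV]; congr 1; exact Finset.sum_congr rfl fun v _ => hV' v x
  -- per-x bound on the ω-lintegral
  have hstep : ∀ x, ∫⁻ ω, F (ω, x) ∂μ
      ≤ ENNReal.ofReal (ψ x * ((1 / n : ℝ) * (V x * (1 - V x)))) := by
    intro x
    have hint2 : Integrable (fun ω => (S ω x - V x) ^ 2) μ := by
      have := (haux x).1
      simp only [← hSV] at this
      exact this
    have hle : ∫ ω, (S ω x - V x) ^ 2 ∂μ ≤ (1 / n : ℝ) * (V x * (1 - V x)) := by
      have := (haux x).2
      simp only [← hSV] at this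
      simp only [← hVp] at this
      exact this
    have hint : Integrable (fun ω => ψ x * (S ω x - V x) ^ 2) μ := hint2.const_mul _
    calc ∫⁻ ω, F (ω, x) ∂μ
        = ENNReal.ofReal (∫ ω, ψ x * (S ω x - V x) ^ 2 ∂μ) :=
          (ofReal_integral_eq_lintegral_ofReal hint
            (ae_of_all _ fun ω => mul_nonneg (hψpos x) (sq_nonneg _))).symm
      _ ≤ ENNReal.ofReal (ψ x * ((1 / n : ℝ) * (V x * (1 - V x)))) := by
          apply ENNReal.ofReal_le_ofReal
          rw [integral_const_mul]
          exact mul_le_mul_of_nonneg_left hle (hψpos x)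
  -- Tonelli
  have hswap : ∫⁻ ω, ∫⁻ x, F (ω, x) ∂volume ∂μ = ∫⁻ x, ∫⁻ ω, F (ω, x) ∂μ ∂volume :=
    lintegral_lintegral_swap hFmeas.aemeasurable
  -- integrability of the dominating function
  have hdom : Integrable (fun x => ψ x * ((1 / n : ℝ) * (V x * (1 - V x)))) volume := by
    have : (fun x => ψ x * ((1 / n : ℝ) * (V x * (1 - V x))))
        = fun x => (1 / n : ℝ) * (ψ x * (V x * (1 - V x))) := by funext x; ring
    rw [this]
    exact hψint.const_mul _
  have hV01 : ∀ x, 0 ≤ V x ∧ V x ≤ 1 := by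
    intro x
    have h0 : ∀ v, 0 ≤ V' v x := fun v => by rw [hV']; exact ENNReal.toReal_nonneg
    have h1 : ∀ v, V' v x ≤ 1 := fun v => by
      rw [hV']
      simpa using ENNReal.toReal_mono (by simp)
        (prob_le_one (μ := μ) (s := {ω | ∀ i, X v ω i ≤ x i}))
    constructor
    · rw [hV]
      exact mul_nonneg (by positivity) (Finset.sum_nonneg fun v _ => h0 v)
    · rw [hV]
      have : ∑ v, V' v x ≤ (n : ℝ) := by
        calc ∑ v, V' v x ≤ ∑ _v : Fin n, (1:ℝ) := Finset.sum_le_sum fun v _ => h1 v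
          _ = (n : ℝ) := by simp
      calc (1 / n : ℝ) * ∑ v, V' v x ≤ (1 / n : ℝ) * (n : ℝ) :=
            mul_le_mul_of_nonneg_left this (by positivity)
        _ = 1 := by field_simp
  have hdomnn : ∀ x, 0 ≤ ψ x * ((1 / n : ℝ) * (V x * (1 - V x))) := fun x =>
    mul_nonneg (hψpos x) (mul_nonneg (by positivity)
      (mul_nonneg (hV01 x).1 (by linarith [(hV01 x).2])))
  have hbound : ∫⁻ ω, ∫⁻ x, F (ω, x) ∂volume ∂μ
      ≤ ENNReal.ofReal ((1 / n : ℝ) * ∫ x, ψ x * (V x * (1 - V x)) ∂volume) := by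
    rw [hswap]
    calc ∫⁻ x, ∫⁻ ω, F (ω, x) ∂μ ∂volume
        ≤ ∫⁻ x, ENNReal.ofReal (ψ x * ((1 / n : ℝ) * (V x * (1 - V x)))) ∂volume :=
          lintegral_mono hstep
      _ = ENNReal.ofReal (∫ x, ψ x * ((1 / n : ℝ) * (V x * (1 - V x))) ∂volume) :=
          (ofReal_integral_eq_lintegral_ofReal hdom (ae_of_all _ hdomnn)).symm
      _ = ENNReal.ofReal ((1 / n : ℝ) * ∫ x, ψ x * (V x * (1 - V x)) ∂volume) := by
          congr 1
          rw [← integral_const_mul]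
          congr 1
          funext x
          ring
  have hmeasInner : Measurable fun ω => ∫⁻ x, F (ω, x) ∂volume :=
    Measurable.lintegral_prod_right hFmeas
  have hfin : ∀ᵐ ω ∂μ, ∫⁻ x, F (ω, x) ∂volume < ⊤ :=
    ae_lt_top hmeasInner (lt_of_le_of_lt hbound ENNReal.ofReal_lt_top).ne
  have heq1 : ∀ ω, ∫ x, ψ x * (S ω x - V x) ^ 2 ∂volume = (∫⁻ x, F (ω, x) ∂volume).toReal := by
    intro ω
    exact integral_eq_lintegral_of_nonneg_ae
      (ae_of_all _ fun x => mul_nonneg (hψpos x) (sq_nonneg _))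
      ((hGmeas.comp measurable_prodMk_left).aestronglyMeasurable)
  have hRHSnn : 0 ≤ (1 / n : ℝ) * ∫ x, ψ x * (V x * (1 - V x)) ∂volume := by
    apply mul_nonneg (by positivity)
    apply integral_nonneg
    intro x
    exact mul_nonneg (hψpos x) (mul_nonneg (hV01 x).1 (by linarith [(hV01 x).2]))
  calc (∫ ω, (∫ x, ψ x * (S ω x - V x) ^ 2 ∂volume) ∂μ)
      = ∫ ω, (∫⁻ x, F (ω, x) ∂volume).toReal ∂μ := integral_congr_ae (ae_of_all _ heq1)
    _ = (∫⁻ ω, ∫⁻ x, F (ω, x) ∂volume ∂μ).toReal := integral_toReal hmeasInner.aemeasurable hfin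
    _ ≤ (ENNReal.ofReal ((1 / n : ℝ) * ∫ x, ψ x * (V x * (1 - V x)) ∂volume)).toReal :=
        ENNReal.toReal_mono ENNReal.ofReal_ne_top hbound
    _ = (1 / n : ℝ) * ∫ x, ψ x * (V x * (1 - V x)) ∂volume := ENNReal.toReal_ofReal hRHSnn
end

section
/- Let μ, ν be Borel probability measures on ℝ^k with finite moments up to order v₁+⋯+v_k, with means a_i(ν) = ∫ x_i dν, and central moments M_{v₁…v_k}(ν) = ∫ ∏_i (x_i − a_i(ν))^{v_i} dν. Then the derivative at t = 0 of t ↦ M_{v₁…v_k}(ν + t(μ−ν)) equals ∫ [∏_i (y_i − a_i(ν))^{v_i} − ∑_{j=1}^k v_j·M_{v₁,…,v_j−1,…,v_k}(ν)·y_j] d(μ−ν)(y), where M_{…,v_j−1,…} denotes the central moment with the j-th index lowered by one. -/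
open MeasureTheory Set Finset

private lemma aux_ae_bound {k : ℕ} (ρ : Measure (Fin k → ℝ)) (R : ℝ)
    (h : ρ {x | ∀ i, |x i| ≤ R}ᶜ = 0) : ∀ᵐ x ∂ρ, ∀ i, |x i| ≤ R := by
  rw [ae_iff]
  exact h

private lemma aux_integrable {k : ℕ} (ρ : Measure (Fin k → ℝ)) [IsProbabilityMeasure ρ]
    {R : ℝ} (h : ∀ᵐ x ∂ρ, ∀ i, |x i| ≤ R) (f : (Fin k → ℝ) → ℝ) (hf : Continuous f)
    {C : ℝ} (hC : ∀ x : Fin k → ℝ, (∀ i, |x i| ≤ R) → |f x| ≤ C) : Integrable f ρ := by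
  refine (integrable_const C).mono' hf.aestronglyMeasurable ?_
  filter_upwards [h] with x hx
  simpa using hC x hx

private lemma aux_prod_update {k : ℕ} (x b : Fin k → ℝ) (v : Fin k → ℕ) (j : Fin k) :
    ∏ i, (x i - b i) ^ (Function.update v j (v j - 1) i) =
      (∏ i ∈ univ.erase j, (x i - b i) ^ v i) * (x j - b j) ^ (v j - 1) := by
  rw [← Finset.prod_erase_mul _ _ (mem_univ j)]
  congr 1
  · exact Finset.prod_congr rfl fun i hi => by
      rw [Function.update_of_ne (Finset.ne_of_mem_erase hi)]
  · rw [Function.update_self]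

private lemma aux_combo {α : Type*} [MeasurableSpace α] (μ ν : Measure α) {t : ℝ}
    (ht0 : 0 ≤ t) (ht1 : t ≤ 1) {f : α → ℝ} (hfν : Integrable f ν) (hfμ : Integrable f μ) :
    ∫ x, f x ∂(ENNReal.ofReal (1 - t) • ν + ENNReal.ofReal t • μ) =
      (1 - t) * ∫ x, f x ∂ν + t * ∫ x, f x ∂μ := by
  rw [integral_add_measure (hfν.smul_measure ENNReal.ofReal_ne_top)
      (hfμ.smul_measure ENNReal.ofReal_ne_top), integral_smul_measure, integral_smul_measure,
    ENNReal.toReal_ofReal (by linarith), ENNReal.toReal_ofReal ht0]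
  simp [smul_eq_mul]

/-- Statistical derivative of the multivariate central moment functional
`M_{v₁…v_k}(ρ) = ∫ ∏ᵢ (xᵢ − aᵢ(ρ))^{vᵢ} dρ`:
its derivative at `t = 0` along `ν + t(μ−ν)` equals
`∫ (∏ᵢ (yᵢ − aᵢ(ν))^{vᵢ} − ∑ⱼ vⱼ M_{…,vⱼ−1,…}(ν) yⱼ) d(μ−ν)(y)`. -/
theorem statement18
    (k : ℕ) (μ ν : Measure (Fin k → ℝ))
    [IsProbabilityMeasure μ] [IsProbabilityMeasure ν]
    (hμ : ∃ R : ℝ, μ {x | ∀ i, |x i| ≤ R}ᶜ = 0)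
    (hν : ∃ R : ℝ, ν {x | ∀ i, |x i| ≤ R}ᶜ = 0)
    (v : Fin k → ℕ)
    (a : Fin k → Measure (Fin k → ℝ) → ℝ) (ha : ∀ i ρ, a i ρ = ∫ x, x i ∂ρ)
    (M : (Fin k → ℕ) → Measure (Fin k → ℝ) → ℝ)
    (hM : ∀ (w : Fin k → ℕ) (ρ : Measure (Fin k → ℝ)),
      M w ρ = ∫ x, ∏ i, (x i - a i ρ) ^ (w i) ∂ρ)
    (g : ℝ → ℝ)
    (hg : ∀ t ∈ Icc (0:ℝ) 1,
      g t = M v (ENNReal.ofReal (1 - t) • ν + ENNReal.ofReal t • μ)) :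
    HasDerivWithinAt g
      ((∫ y, ((∏ i, (y i - a i ν) ^ (v i)) -
          ∑ j, (v j : ℝ) * M (Function.update v j (v j - 1)) ν * y j) ∂μ) -
        ∫ y, ((∏ i, (y i - a i ν) ^ (v i)) -
          ∑ j, (v j : ℝ) * M (Function.update v j (v j - 1)) ν * y j) ∂ν)
      (Icc (0:ℝ) 1) 0 := by
  classical
  obtain ⟨R₁, hR₁⟩ := hμ
  obtain ⟨R₂, hR₂⟩ := hν
  set R : ℝ := max R₁ R₂ with hRdef
  have hsub : ∀ R' : ℝ, R' ≤ R →
      ({x : Fin k → ℝ | ∀ i, |x i| ≤ R}ᶜ ⊆ {x : Fin k → ℝ | ∀ i, |x i| ≤ R'}ᶜ) := by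
    intro R' hR' x hx hx'
    exact hx fun i => (hx' i).trans hR'
  have haeμ : ∀ᵐ x ∂μ, ∀ i, |x i| ≤ R :=
    aux_ae_bound μ R (measure_mono_null (hsub R₁ (le_max_left _ _)) hR₁)
  have haeν : ∀ᵐ x ∂ν, ∀ i, |x i| ≤ R :=
    aux_ae_bound ν R (measure_mono_null (hsub R₂ (le_max_right _ _)) hR₂)
  -- basic data
  set d : Fin k → ℝ := fun i => a i μ - a i ν with hd
  set c : ℝ → Fin k → ℝ := fun t i => a i ν + t * d i with hc
  set f : ℝ → (Fin k → ℝ) → ℝ := fun t x => ∏ i, (x i - c t i) ^ v i with hf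
  set D : ℝ → (Fin k → ℝ) → ℝ := fun t x =>
    ∑ j, (∏ i ∈ univ.erase j, (x i - c t i) ^ v i) *
      ((v j : ℝ) * (x j - c t j) ^ (v j - 1) * (-d j)) with hD
  set N : ℕ := ∑ i, v i with hN
  set B : ℝ := 1 + |R| + ∑ i, (|a i ν| + |d i|) with hB
  have hsum_nonneg : (0:ℝ) ≤ ∑ i, (|a i ν| + |d i|) :=
    Finset.sum_nonneg fun i _ => by positivity
  have hB1 : (1:ℝ) ≤ B := by
    have : (0:ℝ) ≤ |R| := abs_nonneg _
    simp only [hB]; linarith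
  have hB0 : (0:ℝ) ≤ B := by linarith
  -- key factor bound
  have hBc : ∀ (x : Fin k → ℝ) (t : ℝ), (∀ i, |x i| ≤ R) → |t| ≤ 1 →
      ∀ i, |x i - c t i| ≤ B := by
    intro x t hx ht i
    have h1 : |x i - c t i| ≤ |x i| + |a i ν + t * d i| := abs_sub _ _
    have h2 : |a i ν + t * d i| ≤ |a i ν| + |t * d i| := abs_add_le _ _
    have h3 : |t * d i| ≤ |d i| := by
      rw [abs_mul]
      exact mul_le_of_le_one_left (abs_nonneg _) ht
    have h4 : |x i| ≤ |R| := (hx i).trans (le_abs_self _)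
    have h5 : |a i ν| + |d i| ≤ ∑ i', (|a i' ν| + |d i'|) :=
      Finset.single_le_sum (f := fun i' => |a i' ν| + |d i'|)
        (fun i' _ => by positivity) (mem_univ i)
    simp only [hB]; linarith
  -- bound on products of powers
  have hprodb : ∀ (w : Fin k → ℕ) (s : Finset (Fin k)) (t : ℝ) (x : Fin k → ℝ),
      (∀ i, |x i| ≤ R) → |t| ≤ 1 →
      |∏ i ∈ s, (x i - c t i) ^ w i| ≤ B ^ (∑ i ∈ s, w i) := by
    intro w s t x hx ht
    rw [Finset.abs_prod, ← Finset.prod_pow_eq_pow_sum]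
    exact Finset.prod_le_prod (fun i _ => abs_nonneg _)
      (fun i _ => by rw [abs_pow]; exact pow_le_pow_left₀ (abs_nonneg _) (hBc x t hx ht i) _)
  have hpowN : ∀ m : ℕ, m ≤ N → B ^ m ≤ B ^ N := fun m hm => pow_le_pow_right₀ hB1 hm
  have hfb : ∀ (t : ℝ) (x : Fin k → ℝ), (∀ i, |x i| ≤ R) → |t| ≤ 1 →
      |f t x| ≤ B ^ N := fun t x hx ht => hprodb v univ t x hx ht
  have hvjN : ∀ j, v j - 1 ≤ N := fun j =>
    (Nat.sub_le _ _).trans (Finset.single_le_sum (f := fun i => v i) (fun _ _ => Nat.zero_le _)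
      (mem_univ j))
  have heraseN : ∀ j : Fin k, ∑ i ∈ univ.erase j, v i ≤ N :=
    fun j => Finset.sum_le_sum_of_subset (Finset.erase_subset _ _)
  -- bound on D
  set K : ℝ := ∑ j, (v j : ℝ) * |d j| * (B ^ N * B ^ N) with hK
  have hDb : ∀ (t : ℝ) (x : Fin k → ℝ), (∀ i, |x i| ≤ R) → |t| ≤ 1 → |D t x| ≤ K := by
    intro t x hx ht
    refine (Finset.abs_sum_le_sum_abs _ _).trans (Finset.sum_le_sum fun j _ => ?_)
    have h1 : |∏ i ∈ univ.erase j, (x i - c t i) ^ v i| ≤ B ^ N :=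
      (hprodb v (univ.erase j) t x hx ht).trans (hpowN _ (heraseN j))
    have h2 : |(x j - c t j) ^ (v j - 1)| ≤ B ^ N := by
      rw [abs_pow]
      exact (pow_le_pow_left₀ (abs_nonneg _) (hBc x t hx ht j) _).trans (hpowN _ (hvjN j))
    have h3 : |(∏ i ∈ univ.erase j, (x i - c t i) ^ v i) *
        ((v j : ℝ) * (x j - c t j) ^ (v j - 1) * (-d j))| =
        |∏ i ∈ univ.erase j, (x i - c t i) ^ v i| *
        ((v j : ℝ) * |(x j - c t j) ^ (v j - 1)| * |d j|) := by
      rw [abs_mul, abs_mul, abs_mul, abs_neg, Nat.abs_cast]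
    rw [h3]
    calc |∏ i ∈ univ.erase j, (x i - c t i) ^ v i| *
          ((v j : ℝ) * |(x j - c t j) ^ (v j - 1)| * |d j|)
        ≤ B ^ N * ((v j : ℝ) * B ^ N * |d j|) := by
          gcongr
      _ = (v j : ℝ) * |d j| * (B ^ N * B ^ N) := by ring
  -- pointwise derivative
  have hader : ∀ (t : ℝ) (x : Fin k → ℝ), HasDerivAt (fun s => f s x) (D t x) t := by
    intro t x
    have h : ∀ i ∈ (univ : Finset (Fin k)), HasDerivAt (fun s => (x i - c s i) ^ v i)
        ((v i : ℝ) * (x i - c t i) ^ (v i - 1) * (-d i)) t := by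
      intro i _
      have h1 : HasDerivAt (fun s : ℝ => x i - c s i) (-d i) t := by
        have h2 := ((hasDerivAt_id t).mul_const (d i)).const_add (a i ν)
        have h3 := (hasDerivAt_const t (x i)).sub h2
        simpa [hc, Pi.sub_def] using h3
      exact h1.pow (v i)
    have := HasDerivAt.fun_finsetProd h
    simpa [hf, hD, smul_eq_mul] using this
  -- continuity
  have hfc : ∀ t, Continuous (f t) := by
    intro t
    exact continuous_finset_prod _ fun i _ => ((continuous_apply i).sub continuous_const).pow _
  have hDc : ∀ t, Continuous (D t) := by
    intro t
    refine continuous_finset_sum _ fun j _ => Continuous.mul ?_ ?_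
    · exact continuous_finset_prod _ fun i _ =>
        ((continuous_apply i).sub continuous_const).pow _
    · exact (continuous_const.mul (((continuous_apply j).sub continuous_const).pow _)).mul
        continuous_const
  -- integrability of f t
  have hfintν : ∀ t : ℝ, |t| ≤ 1 → Integrable (f t) ν := fun t ht =>
    aux_integrable ν haeν (f t) (hfc t) (fun x hx => hfb t x hx ht)
  have hfintμ : ∀ t : ℝ, |t| ≤ 1 → Integrable (f t) μ := fun t ht =>
    aux_integrable μ haeμ (f t) (hfc t) (fun x hx => hfb t x hx ht)
  -- dominated derivative theorem, for ν and μ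
  have hball : ∀ t ∈ Metric.ball (0:ℝ) 1, |t| ≤ 1 := by
    intro t ht
    rw [Metric.mem_ball, Real.dist_eq, sub_zero] at ht
    exact ht.le
  have hGν : HasDerivAt (fun t => ∫ x, f t x ∂ν) (∫ x, D 0 x ∂ν) 0 := by
    refine (hasDerivAt_integral_of_dominated_loc_of_deriv_le (F := f) (F' := D)
      (bound := fun _ => K) (Metric.ball_mem_nhds 0 one_pos)
      (Filter.Eventually.of_forall fun t => (hfc t).aestronglyMeasurable)
      (hfintν 0 (by norm_num)) ((hDc 0).aestronglyMeasurable) ?_ (integrable_const K) ?_).2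
    · filter_upwards [haeν] with x hx t ht
      simpa [Real.norm_eq_abs] using hDb t x hx (hball t ht)
    · exact Filter.Eventually.of_forall fun x t _ => hader t x
  have hGμ : HasDerivAt (fun t => ∫ x, f t x ∂μ) (∫ x, D 0 x ∂μ) 0 := by
    refine (hasDerivAt_integral_of_dominated_loc_of_deriv_le (F := f) (F' := D)
      (bound := fun _ => K) (Metric.ball_mem_nhds 0 one_pos)
      (Filter.Eventually.of_forall fun t => (hfc t).aestronglyMeasurable)
      (hfintμ 0 (by norm_num)) ((hDc 0).aestronglyMeasurable) ?_ (integrable_const K) ?_).2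
    · filter_upwards [haeμ] with x hx t ht
      simpa [Real.norm_eq_abs] using hDb t x hx (hball t ht)
    · exact Filter.Eventually.of_forall fun x t _ => hader t x
  -- the auxiliary function φ
  set φ : ℝ → ℝ := fun t => (1 - t) * (∫ x, f t x ∂ν) + t * (∫ x, f t x ∂μ) with hφdef
  have h1 : HasDerivAt (fun t : ℝ => 1 - t) (-1) 0 := by
    simpa using (hasDerivAt_id (0:ℝ)).const_sub 1
  have hφ : HasDerivAt φ
      ((-1) * (∫ x, f 0 x ∂ν) + (1 - 0) * (∫ x, D 0 x ∂ν) +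
        (1 * (∫ x, f 0 x ∂μ) + 0 * (∫ x, D 0 x ∂μ))) 0 :=
    (h1.mul hGν).add ((hasDerivAt_id 0).mul hGμ)
  -- integrability of coordinates
  have hXν : ∀ i, Integrable (fun x : Fin k → ℝ => x i) ν := fun i =>
    aux_integrable ν haeν _ (continuous_apply i) (fun x hx => (hx i).trans (le_abs_self _))
  have hXμ : ∀ i, Integrable (fun x : Fin k → ℝ => x i) μ := fun i =>
    aux_integrable μ haeμ _ (continuous_apply i) (fun x hx => (hx i).trans (le_abs_self _))
  -- g = φ on Icc 0 1
  have hgφ : ∀ t ∈ Icc (0:ℝ) 1, g t = φ t := by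
    intro t ht
    obtain ⟨ht0, ht1⟩ := ht
    have htabs : |t| ≤ 1 := abs_le.2 ⟨by linarith, ht1⟩
    have hat : ∀ i, a i (ENNReal.ofReal (1 - t) • ν + ENNReal.ofReal t • μ) = c t i := by
      intro i
      rw [ha, aux_combo μ ν ht0 ht1 (hXν i) (hXμ i), ← ha, ← ha]
      simp only [hc, hd]; ring
    rw [hg t ⟨ht0, ht1⟩, hM]
    have : (fun x : Fin k → ℝ =>
        ∏ i, (x i - a i (ENNReal.ofReal (1 - t) • ν + ENNReal.ofReal t • μ)) ^ v i) = f t := by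
      funext x
      exact Finset.prod_congr rfl fun i _ => by rw [hat i]
    rw [this, aux_combo μ ν ht0 ht1 (hfintν t htabs) (hfintμ t htabs)]
  -- identify f 0 with the centered product at ν
  have hc0 : ∀ i, c 0 i = a i ν := fun i => by simp [hc]
  have hf0 : ∀ y : Fin k → ℝ, f 0 y = ∏ i, (y i - a i ν) ^ v i := by
    intro y
    exact Finset.prod_congr rfl fun i _ => by rw [hc0 i]
  -- integrability of centered products for arbitrary exponents
  have hPint : ∀ (w : Fin k → ℕ) (ρ : Measure (Fin k → ℝ)) [IsProbabilityMeasure ρ],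
      (∀ᵐ x ∂ρ, ∀ i, |x i| ≤ R) →
      Integrable (fun x => ∏ i, (x i - a i ν) ^ w i) ρ := by
    intro w ρ _ hae
    refine aux_integrable ρ hae _
      (continuous_finset_prod _ fun i _ => ((continuous_apply i).sub continuous_const).pow _)
      (C := B ^ (∑ i, w i)) ?_
    intro x hx
    have := hprodb w univ 0 x hx (by norm_num)
    simpa [hc0] using this
  -- compute ∫ D 0 in terms of M
  have hD0 : ∀ x : Fin k → ℝ, D 0 x =
      ∑ j, (-d j) * ((v j : ℝ) * ∏ i, (x i - a i ν) ^ (Function.update v j (v j - 1) i)) := by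
    intro x
    refine Finset.sum_congr rfl fun j _ => ?_
    rw [aux_prod_update x (fun i => a i ν) v j]
    have he : ∀ i, x i - c 0 i = x i - a i ν := fun i => by rw [hc0]
    simp only [he]
    ring
  have hDint : ∫ x, D 0 x ∂ν = ∑ j, (-d j) *
      ((v j : ℝ) * M (Function.update v j (v j - 1)) ν) := by
    have h0 : ∫ x, D 0 x ∂ν = ∫ x, ∑ j, (-d j) *
        ((v j : ℝ) * ∏ i, (x i - a i ν) ^ (Function.update v j (v j - 1) i)) ∂ν := by
      congr 1
      funext x
      exact hD0 x
    rw [h0, integral_finset_sum _ (fun j _ =>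
      (((hPint (Function.update v j (v j - 1)) ν haeν).const_mul _).const_mul _))]
    refine Finset.sum_congr rfl fun j _ => ?_
    rw [integral_const_mul, integral_const_mul, hM]
  -- the two sides of the statement
  have hPLμ : ∫ y, ((∏ i, (y i - a i ν) ^ (v i)) -
        ∑ j, (v j : ℝ) * M (Function.update v j (v j - 1)) ν * y j) ∂μ =
      (∫ x, f 0 x ∂μ) - ∑ j, (v j : ℝ) * M (Function.update v j (v j - 1)) ν * a j μ := by
    rw [integral_sub (hPint v μ haeμ)
      (integrable_finset_sum _ fun j _ => (hXμ j).const_mul _)]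
    congr 1
    · exact integral_congr_ae (Filter.Eventually.of_forall fun y => (hf0 y).symm)
    · rw [integral_finset_sum _ fun j _ => (hXμ j).const_mul _]
      exact Finset.sum_congr rfl fun j _ => by rw [integral_const_mul, ha]
  have hPLν : ∫ y, ((∏ i, (y i - a i ν) ^ (v i)) -
        ∑ j, (v j : ℝ) * M (Function.update v j (v j - 1)) ν * y j) ∂ν =
      (∫ x, f 0 x ∂ν) - ∑ j, (v j : ℝ) * M (Function.update v j (v j - 1)) ν * a j ν := by
    rw [integral_sub (hPint v ν haeν)
      (integrable_finset_sum _ fun j _ => (hXν j).const_mul _)]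
    congr 1
    · exact integral_congr_ae (Filter.Eventually.of_forall fun y => (hf0 y).symm)
    · rw [integral_finset_sum _ fun j _ => (hXν j).const_mul _]
      exact Finset.sum_congr rfl fun j _ => by rw [integral_const_mul, ha]
  have hsum : (∑ j, (v j : ℝ) * M (Function.update v j (v j - 1)) ν * a j ν) -
      (∑ j, (v j : ℝ) * M (Function.update v j (v j - 1)) ν * a j μ) =
      ∑ j, (-d j) * ((v j : ℝ) * M (Function.update v j (v j - 1)) ν) := by
    rw [← Finset.sum_sub_distrib]
    exact Finset.sum_congr rfl fun j _ => by simp only [hd]; ring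
  have hval : ((∫ y, ((∏ i, (y i - a i ν) ^ (v i)) -
          ∑ j, (v j : ℝ) * M (Function.update v j (v j - 1)) ν * y j) ∂μ) -
        ∫ y, ((∏ i, (y i - a i ν) ^ (v i)) -
          ∑ j, (v j : ℝ) * M (Function.update v j (v j - 1)) ν * y j) ∂ν) =
      ((-1) * (∫ x, f 0 x ∂ν) + (1 - 0) * (∫ x, D 0 x ∂ν) +
        (1 * (∫ x, f 0 x ∂μ) + 0 * (∫ x, D 0 x ∂μ))) := by
    rw [hPLμ, hPLν, hDint]
    linarith [hsum]
  rw [hval]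
  exact (hφ.hasDerivWithinAt).congr (fun t ht => hgφ t ht)
    (hgφ 0 ⟨le_refl 0, by norm_num⟩)
end
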